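/- For all complex numbers z and w, |e^z + e^w − 2| ≤ 2 cosh(max(|z|,|w|)) − 2 + 2 sinh(|z+w|/2). -/

import Mathlib

lemma abs_sinh_le_sinh_abs (z : ℂ) :
    ‖Complex.sinh z‖ ≤ Real.sinh (‖z‖) := by
  have h1 := Complex.hasSum_sinh z
  have h2 := Real.hasSum_sinh (‖z‖)
  have hnorm : ∀ n : ℕ, ‖z ^ (2 * n + 1) / (((2 * n + 1).factorial : ℕ) : ℂ)‖
      = (‖z‖) ^ (2 * n + 1) / (((2 * n + 1).factorial : ℕ) : ℝ) := by
    intro n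
    simp [norm_div, norm_pow, Complex.norm_natCast]
  have hsum : Summable fun n : ℕ => ‖z ^ (2 * n + 1) / (((2 * n + 1).factorial : ℕ) : ℂ)‖ := by
    simpa only [hnorm] using h2.summable
  calc ‖Complex.sinh z‖
      = ‖∑' n : ℕ, z ^ (2 * n + 1) / (((2 * n + 1).factorial : ℕ) : ℂ)‖ := by
        rw [← h1.tsum_eq]
    _ ≤ ∑' n : ℕ, ‖z ^ (2 * n + 1) / (((2 * n + 1).factorial : ℕ) : ℂ)‖ :=
        norm_tsum_le_tsum_norm hsum
    _ = ∑' n : ℕ, (‖z‖) ^ (2 * n + 1) / (((2 * n + 1).factorial : ℕ) : ℝ) := by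
        simp only [hnorm]
    _ = Real.sinh (‖z‖) := h2.tsum_eq

lemma abs_two_cosh_sub_two_le (w : ℂ) :
    ‖2 * Complex.cosh w - 2‖ ≤ 2 * Real.cosh (‖w‖) - 2 := by
  have f1 : Complex.exp (w / 2) ^ 2 = Complex.exp w := by
    rw [sq, ← Complex.exp_add, add_halves]
  have f2 : Complex.exp (-(w / 2)) ^ 2 = Complex.exp (-w) := by
    rw [sq, ← Complex.exp_add, show -(w / 2) + -(w / 2) = -w by ring]
  have f3 : Complex.exp (w / 2) * Complex.exp (-(w / 2)) = 1 := by
    rw [← Complex.exp_add, add_neg_cancel, Complex.exp_zero]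
  have hC : (2 : ℂ) * Complex.cosh w - 2 = 4 * (Complex.sinh (w / 2)) ^ 2 := by
    rw [Complex.cosh, Complex.sinh]
    linear_combination -f1 - f2 + 2 * f3
  set x : ℝ := ‖w‖ with hx
  have g1 : Real.exp (x / 2) ^ 2 = Real.exp x := by
    rw [sq, ← Real.exp_add, add_halves]
  have g2 : Real.exp (-(x / 2)) ^ 2 = Real.exp (-x) := by
    rw [sq, ← Real.exp_add, show -(x / 2) + -(x / 2) = -x by ring]
  have g3 : Real.exp (x / 2) * Real.exp (-(x / 2)) = 1 := by
    rw [← Real.exp_add, add_neg_cancel, Real.exp_zero]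
  have hR : 2 * Real.cosh x - 2 = 4 * (Real.sinh (x / 2)) ^ 2 := by
    rw [Real.cosh_eq, Real.sinh_eq]
    linear_combination -g1 - g2 + 2 * g3
  rw [hC, hR]
  have habs : ‖w / 2‖ = x / 2 := by
    rw [norm_div, hx]; norm_num
  have h1 : ‖Complex.sinh (w / 2)‖ ≤ Real.sinh (x / 2) := by
    simpa [habs] using abs_sinh_le_sinh_abs (w / 2)
  have h0 : (0 : ℝ) ≤ ‖Complex.sinh (w / 2)‖ := norm_nonneg _
  calc ‖4 * (Complex.sinh (w / 2)) ^ 2‖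
      = 4 * (‖Complex.sinh (w / 2)‖) ^ 2 := by
        rw [norm_mul, norm_pow]; norm_num
    _ ≤ 4 * (Real.sinh (x / 2)) ^ 2 := by nlinarith

lemma key_bound (z w : ℂ) (h : z.re ≤ w.re) :
    ‖Complex.exp z + Complex.exp w - 2‖ ≤
      2 * Real.cosh (max (‖z‖) (‖w‖)) - 2 +
      2 * Real.sinh (‖z + w‖ / 2) := by
  have e1 : Complex.exp ((z - w) / 2) * Complex.exp ((z + w) / 2) = Complex.exp z := by
    rw [← Complex.exp_add, show (z - w) / 2 + (z + w) / 2 = z by ring]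
  have e2 : Complex.exp ((z - w) / 2) * Complex.exp (-((z + w) / 2)) = Complex.exp (-w) := by
    rw [← Complex.exp_add, show (z - w) / 2 + -((z + w) / 2) = -w by ring]
  have hid : Complex.exp z + Complex.exp w - 2 =
      2 * Complex.exp ((z - w) / 2) * Complex.sinh ((z + w) / 2)
        + (2 * Complex.cosh w - 2) := by
    rw [Complex.sinh, Complex.cosh]
    linear_combination -e1 + e2
  have tri : ‖Complex.exp z + Complex.exp w - 2‖ ≤
      ‖2 * Complex.exp ((z - w) / 2) * Complex.sinh ((z + w) / 2)‖
        + ‖2 * Complex.cosh w - 2‖ := by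
    rw [hid]; exact norm_add_le _ _
  have hsinh : ‖2 * Complex.exp ((z - w) / 2) * Complex.sinh ((z + w) / 2)‖
      ≤ 2 * Real.sinh (‖z + w‖ / 2) := by
    rw [norm_mul, norm_mul, Complex.norm_exp]
    have habs2 : ‖(2 : ℂ)‖ = 2 := by norm_num
    rw [habs2]
    have hre : ((z - w) / 2).re ≤ 0 := by
      have : ((z - w) / 2).re = (z.re - w.re) / 2 := by
        simp [Complex.div_re, Complex.sub_re]
      rw [this]; linarith
    have hexp : Real.exp (((z - w) / 2).re) ≤ 1 := Real.exp_le_one_iff.mpr hre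
    have hsin : ‖Complex.sinh ((z + w) / 2)‖ ≤
        Real.sinh (‖z + w‖ / 2) := by
      have habs : ‖(z + w) / 2‖ = ‖z + w‖ / 2 := by
        rw [norm_div]; norm_num
      simpa [habs] using abs_sinh_le_sinh_abs ((z + w) / 2)
    have hsin0 : (0 : ℝ) ≤ Real.sinh (‖z + w‖ / 2) :=
      Real.sinh_nonneg_iff.mpr (by positivity)
    have h0 : (0 : ℝ) ≤ ‖Complex.sinh ((z + w) / 2)‖ := norm_nonneg _
    have hexp0 : (0 : ℝ) < Real.exp (((z - w) / 2).re) := Real.exp_pos _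
    nlinarith
  have hcosh : ‖2 * Complex.cosh w - 2‖ ≤
      2 * Real.cosh (max (‖z‖) (‖w‖)) - 2 := by
    refine (abs_two_cosh_sub_two_le w).trans ?_
    have hmono : Real.cosh (‖w‖) ≤ Real.cosh (max (‖z‖) (‖w‖)) := by
      rw [Real.cosh_le_cosh,
        _root_.abs_of_nonneg (norm_nonneg _),
        _root_.abs_of_nonneg (le_trans (norm_nonneg w) (le_max_right _ _))]
      exact le_max_right _ _
    linarith
  calc ‖Complex.exp z + Complex.exp w - 2‖
      ≤ ‖2 * Complex.exp ((z - w) / 2) * Complex.sinh ((z + w) / 2)‖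
        + ‖2 * Complex.cosh w - 2‖ := tri
    _ ≤ 2 * Real.sinh (‖z + w‖ / 2)
        + (2 * Real.cosh (max (‖z‖) (‖w‖)) - 2) := add_le_add hsinh hcosh
    _ = _ := by ring

theorem exp_add_exp_sub_two_bound (z w : ℂ) :
    ‖Complex.exp z + Complex.exp w - 2‖ ≤
      2 * Real.cosh (max (‖z‖) (‖w‖)) - 2 +
      2 * Real.sinh (‖z + w‖ / 2) := by
  rcases le_total z.re w.re with h | h
  · exact key_bound z w h
  · have := key_bound w z h
    rw [add_comm w z, max_comm (‖w‖) (‖z‖), add_comm (Complex.exp w)] at this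
    exact this
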